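/- arXiv:cs/0408022 — 3 statements merged into one kernel-verified Lean document; each statement's English description precedes it below -/
import Mathlib

section
/- Let r ≥ 2 and let G = (V,E) be an r-regular simple graph that is triangle-free and satisfies N(u) ≠ N(v) for every two distinct nodes u and v. Then for any two distinct subsets F₁ and F₂ of V with |F₁| ≤ r and |F₂| ≤ r, there exists a node w in the symmetric difference F₁ Δ F₂ that is adjacent to some node x not in F₁ ∪ F₂. -/
open Finset
open scoped symmDiff

theorem stmt_0 {V : Type*} [Fintype V] [DecidableEq V] (G : SimpleGraph V)
    [DecidableRel G.Adj] (r : ℕ) (hr : 2 ≤ r)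
    (hreg : G.IsRegularOfDegree r)
    (htf : G.CliqueFree 3)
    (hnbr : ∀ u v : V, u ≠ v → G.neighborFinset u ≠ G.neighborFinset v)
    (F₁ F₂ : Finset V) (hne : F₁ ≠ F₂)
    (h1 : F₁.card ≤ r) (h2 : F₂.card ≤ r) :
    ∃ w ∈ F₁ ∆ F₂, ∃ x, x ∉ F₁ ∪ F₂ ∧ G.Adj w x := by
  by_contra h
  push_neg at h
  have htri : ∀ a b c : V, G.Adj a b → G.Adj a c → G.Adj b c → False := by
    intro a b c hab hac hbc
    exact htf {a, b, c} ((SimpleGraph.is3Clique_triple_iff).2 ⟨hab, hac, hbc⟩)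
  have hdisj : ∀ a b : V, G.Adj a b →
      Disjoint (G.neighborFinset a) (G.neighborFinset b) := by
    intro a b hab
    rw [Finset.disjoint_left]
    intro z hza hzb
    rw [SimpleGraph.mem_neighborFinset] at hza hzb
    exact htri a b z hab hza hzb
  have hNsub : ∀ a ∈ F₁ ∆ F₂, G.neighborFinset a ⊆ F₁ ∪ F₂ := by
    intro a ha x hx
    by_contra hxS
    exact h a ha x hxS ((SimpleGraph.mem_neighborFinset G a x).1 hx)
  have hcard : ∀ a : V, (G.neighborFinset a).card = r := fun a => hreg a
  obtain ⟨w, hw⟩ : (F₁ ∆ F₂).Nonempty := by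
    rw [Finset.nonempty_iff_ne_empty]
    intro hc
    exact hne (Finset.symmDiff_eq_empty.mp hc)
  by_cases hc : ∃ u ∈ G.neighborFinset w, u ∈ F₁ ∆ F₂
  · obtain ⟨u, huN, huΔ⟩ := hc
    have hwu : G.Adj w u := (SimpleGraph.mem_neighborFinset G w u).1 huN
    have hd := hdisj w u hwu
    have hsubS : G.neighborFinset w ∪ G.neighborFinset u ⊆ F₁ ∪ F₂ :=
      Finset.union_subset (hNsub w hw) (hNsub u huΔ)
    have hcardU : (G.neighborFinset w ∪ G.neighborFinset u).card = 2 * r := by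
      rw [Finset.card_union_of_disjoint hd, hcard, hcard]; ring
    have hSle : (F₁ ∪ F₂).card ≤ 2 * r := by
      calc (F₁ ∪ F₂).card ≤ F₁.card + F₂.card := Finset.card_union_le _ _
        _ ≤ 2 * r := by omega
    have hSeq : G.neighborFinset w ∪ G.neighborFinset u = F₁ ∪ F₂ := by
      apply Finset.eq_of_subset_of_card_le hsubS
      rw [hcardU]; exact hSle
    have hScard : (F₁ ∪ F₂).card = 2 * r := by rw [← hSeq, hcardU]
    have hinter : F₁ ∩ F₂ = ∅ := by
      have := Finset.card_union_add_card_inter F₁ F₂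
      have hint : (F₁ ∩ F₂).card = 0 := by omega
      exact Finset.card_eq_zero.mp hint
    have hΔeq : F₁ ∆ F₂ = F₁ ∪ F₂ := by
      ext a
      rw [Finset.mem_symmDiff, Finset.mem_union]
      constructor
      · rintro (⟨ha, _⟩ | ⟨ha, _⟩)
        · exact Or.inl ha
        · exact Or.inr ha
      · intro ha
        rcases ha with ha | ha
        · left; refine ⟨ha, fun hb => ?_⟩
          have : a ∈ F₁ ∩ F₂ := Finset.mem_inter.2 ⟨ha, hb⟩
          simp [hinter] at this
        · right; refine ⟨ha, fun hb => ?_⟩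
          have : a ∈ F₁ ∩ F₂ := Finset.mem_inter.2 ⟨hb, ha⟩
          simp [hinter] at this
    -- every neighbor x of w has N(x) = N(u)
    have key : ∀ x ∈ G.neighborFinset w, G.neighborFinset x = G.neighborFinset u := by
      intro x hxN
      have hwx : G.Adj w x := (SimpleGraph.mem_neighborFinset G w x).1 hxN
      have hxΔ : x ∈ F₁ ∆ F₂ := by
        rw [hΔeq, ← hSeq]
        exact Finset.mem_union_left _ hxN
      have hsub : G.neighborFinset x ⊆ G.neighborFinset u := by
        intro z hz
        have hzS : z ∈ F₁ ∪ F₂ := hNsub x hxΔ hz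
        rw [← hSeq, Finset.mem_union] at hzS
        rcases hzS with hzw | hzu
        · exfalso
          have hdx := hdisj w x hwx
          exact (Finset.disjoint_left.1 hdx) hzw hz
        · exact hzu
      apply Finset.eq_of_subset_of_card_le hsub
      rw [hcard, hcard]
    obtain ⟨x, hx, y, hy, hxy⟩ : ∃ x ∈ G.neighborFinset w, ∃ y ∈ G.neighborFinset w, x ≠ y := by
      rw [← Finset.one_lt_card]
      rw [hcard]; omega
    exact hnbr x y hxy (by rw [key x hx, key y hy])
  · push_neg at hc
    have hNint : G.neighborFinset w ⊆ F₁ ∩ F₂ := by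
      intro x hx
      have hxS := hNsub w hw hx
      have hxΔ := hc x hx
      rw [Finset.mem_union] at hxS
      rw [Finset.mem_symmDiff] at hxΔ
      push_neg at hxΔ
      rw [Finset.mem_inter]
      rcases hxS with hx1 | hx2
      · exact ⟨hx1, hxΔ.1 hx1⟩
      · exact ⟨hxΔ.2 hx2, hx2⟩
    have hwself : w ∉ G.neighborFinset w := by
      simp [SimpleGraph.mem_neighborFinset]
    rw [Finset.mem_symmDiff] at hw
    rcases hw with ⟨hw1, hw2⟩ | ⟨hw2, hw1⟩
    · have hsub : insert w (G.neighborFinset w) ⊆ F₁ := by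
        intro z hz
        rcases Finset.mem_insert.1 hz with rfl | hz
        · exact hw1
        · exact (Finset.mem_inter.1 (hNint hz)).1
      have := Finset.card_le_card hsub
      rw [Finset.card_insert_of_notMem hwself, hcard] at this
      omega
    · have hsub : insert w (G.neighborFinset w) ⊆ F₂ := by
        intro z hz
        rcases Finset.mem_insert.1 hz with rfl | hz
        · exact hw2
        · exact (Finset.mem_inter.1 (hNint hz)).2
      have := Finset.card_le_card hsub
      rw [Finset.card_insert_of_notMem hwself, hcard] at this
      omega
end

section
/- Let G be an r-regular graph with r ≥ 5 that is triangle-free, and suppose z is a vertex with s ≥ 2 neighbors z₁,...,z_s inside a set D ⊆ V, where each vertex of G has at most 2 common neighbors with any other vertex. Let A = ⋃ᵢ (N(zᵢ) − {z}). Then |A| ≥ s(r−1)/2 and A is disjoint from {z} ∪ N(z). -/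
open Finset

theorem stmt_13 {V : Type*} [Fintype V] [DecidableEq V] (G : SimpleGraph V)
    [DecidableRel G.Adj] (r : ℕ) (hr : 5 ≤ r)
    (hreg : G.IsRegularOfDegree r)
    (htf : G.CliqueFree 3)
    (hcn : ∀ u v : V, u ≠ v →
      (G.neighborFinset u ∩ G.neighborFinset v).card ≤ 2)
    (D : Finset V) (z : V) (s : ℕ) (hs : 2 ≤ s)
    (zs : Finset V) (hzsD : zs ⊆ D) (hzsN : zs ⊆ G.neighborFinset z)
    (hzscard : zs.card = s)
    (A : Finset V) (hA : A = zs.biUnion (fun zi => G.neighborFinset zi \ {z})) :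
    s * (r - 1) ≤ 2 * A.card ∧
      Disjoint A (insert z (G.neighborFinset z)) := by
  set f : V → Finset V := fun zi => G.neighborFinset zi \ {z} with hf
  -- membership characterization
  have hmem : ∀ a ∈ A, ∃ i ∈ zs, G.Adj i a ∧ a ≠ z := by
    intro a ha
    rw [hA, mem_biUnion] at ha
    obtain ⟨i, hi, hai⟩ := ha
    rw [mem_sdiff, SimpleGraph.mem_neighborFinset, mem_singleton] at hai
    exact ⟨i, hi, hai.1, hai.2⟩
  constructor
  · -- counting
    have hsum1 : ∀ i ∈ zs, (f i).card = r - 1 := by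
      intro i hi
      have hadj : G.Adj z i := (SimpleGraph.mem_neighborFinset _ _ _).1 (hzsN hi)
      have hz : z ∈ G.neighborFinset i := by
        rw [SimpleGraph.mem_neighborFinset]; exact hadj.symm
      rw [hf]
      simp only []
      rw [sdiff_singleton_eq_erase, card_erase_of_mem hz,
        SimpleGraph.card_neighborFinset_eq_degree, hreg i]
    have hcount : ∑ i ∈ zs, (f i).card ≤ 2 * A.card := by
      have hsub : ∀ i ∈ zs, f i ⊆ A := by
        intro i hi
        rw [hA]; exact subset_biUnion_of_mem _ hi
      calc ∑ i ∈ zs, (f i).card = ∑ i ∈ zs, ∑ a ∈ A, (if a ∈ f i then 1 else 0) := by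
            refine sum_congr rfl fun i hi => ?_
            rw [← card_filter, filter_mem_eq_inter, inter_eq_right.2 (hsub i hi)]
        _ = ∑ a ∈ A, ∑ i ∈ zs, (if a ∈ f i then 1 else 0) := sum_comm
        _ = ∑ a ∈ A, (zs.filter (fun i => a ∈ f i)).card := by
            refine sum_congr rfl fun a _ => ?_
            exact (card_filter _ _).symm
        _ ≤ ∑ _a ∈ A, 2 := by
            refine sum_le_sum fun a ha => ?_
            obtain ⟨i, hi, hadj, haz⟩ := hmem a ha
            refine le_trans (card_le_card ?_) (hcn z a (Ne.symm haz))
            intro j hj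
            rw [mem_filter] at hj
            obtain ⟨hjz, hja⟩ := hj
            rw [hf] at hja
            simp only [mem_sdiff, SimpleGraph.mem_neighborFinset, mem_singleton] at hja
            rw [mem_inter, SimpleGraph.mem_neighborFinset, SimpleGraph.mem_neighborFinset]
            exact ⟨(SimpleGraph.mem_neighborFinset _ _ _).1 (hzsN hjz), hja.1.symm⟩
        _ = 2 * A.card := by rw [sum_const, smul_eq_mul, mul_comm]
    calc s * (r - 1) = ∑ i ∈ zs, (f i).card := by
          rw [sum_congr rfl hsum1, sum_const, smul_eq_mul, hzscard]
      _ ≤ 2 * A.card := hcount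
  · -- disjointness
    rw [disjoint_left]
    intro a ha hmem2
    obtain ⟨i, hi, hadj, haz⟩ := hmem a ha
    rw [mem_insert] at hmem2
    rcases hmem2 with h | h
    · exact haz h
    · have hzi : G.Adj z i := (SimpleGraph.mem_neighborFinset _ _ _).1 (hzsN hi)
      have hza : G.Adj z a := (SimpleGraph.mem_neighborFinset _ _ _).1 h
      exact htf {z, i, a} ⟨by
        intro u hu v hv huv
        simp only [coe_insert, Set.mem_insert_iff, coe_singleton, Set.mem_singleton_iff] at hu hv
        rcases hu with rfl | rfl | rfl <;> rcases hv with rfl | rfl | rfl <;>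
          first | exact absurd rfl huv | exact hzi | exact hza | exact hadj |
            exact hzi.symm | exact hza.symm | exact hadj.symm, by
        rw [card_insert_of_notMem, card_insert_of_notMem, card_singleton]
        · simp only [mem_singleton]; exact fun hh => G.ne_of_adj hadj hh
        · simp only [mem_insert, mem_singleton]
          push_neg
          exact ⟨G.ne_of_adj hzi, G.ne_of_adj hza⟩⟩
end

section
/- In the star graph Sₙ with n ≥ 3, any two distinct vertices have at most 2 common neighbors, and N(u) ≠ N(v) for all distinct vertices u and v. -/
open Finset

/-- The `n`-dimensional star graph `Sₙ`: vertices are the permutations of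
`{1,…,n}` (modelled as `Equiv.Perm (Fin n)`), and `u` is adjacent to `v` iff
`v` is obtained from `u` by swapping the entry in the first position with the
entry in the `k`-th position for some `k ≠ 1`. -/
def starGraph (n : ℕ) : SimpleGraph (Equiv.Perm (Fin n)) :=
  SimpleGraph.fromRel (fun u v =>
    ∃ j k : Fin n, j.val = 0 ∧ j ≠ k ∧ v = u * Equiv.swap j k)

noncomputable instance (n : ℕ) : DecidableRel (starGraph n).Adj :=
  fun _ _ => Classical.dec _

section Aux

variable {n : ℕ} [NeZero n]

lemma swap_mul_ne (u : Equiv.Perm (Fin n)) {k : Fin n} (hk : k ≠ 0) :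
    u * Equiv.swap 0 k ≠ u := by
  intro h
  have h0 := congrArg (fun p : Equiv.Perm (Fin n) => p 0) h
  simp only [Equiv.Perm.mul_apply, Equiv.swap_apply_left] at h0
  exact hk (u.injective h0)

lemma starGraph_adj_iff (u v : Equiv.Perm (Fin n)) :
    (starGraph n).Adj u v ↔ ∃ k : Fin n, k ≠ 0 ∧ v = u * Equiv.swap 0 k := by
  rw [starGraph, SimpleGraph.fromRel_adj]
  constructor
  · rintro ⟨hne, h | h⟩
    · obtain ⟨j, k, hj, hjk, rfl⟩ := h
      have hj0 : j = 0 := Fin.ext (by simpa using hj)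
      subst hj0
      exact ⟨k, Ne.symm hjk, rfl⟩
    · obtain ⟨j, k, hj, hjk, hv⟩ := h
      have hj0 : j = 0 := Fin.ext (by simpa using hj)
      subst hj0
      refine ⟨k, Ne.symm hjk, ?_⟩
      rw [hv, mul_assoc, Equiv.swap_mul_self, mul_one]
  · rintro ⟨k, hk, rfl⟩
    exact ⟨(swap_mul_ne u hk).symm, Or.inl ⟨0, k, rfl, Ne.symm hk, rfl⟩⟩

lemma key {u v : Equiv.Perm (Fin n)} (huv : u ≠ v) {w : Equiv.Perm (Fin n)}
    {k l : Fin n} (hk : k ≠ 0) (hw : w = u * Equiv.swap 0 k)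
    (hw' : w = v * Equiv.swap 0 l) : (u⁻¹ * v)⁻¹ 0 = k := by
  have heq : u * Equiv.swap 0 k = v * Equiv.swap 0 l := hw.symm.trans hw'
  have hkl : k ≠ l := by
    rintro rfl
    exact huv (mul_right_cancel heq)
  have hσ : u⁻¹ * v = Equiv.swap 0 k * Equiv.swap 0 l := by
    have : v = u * Equiv.swap 0 k * Equiv.swap 0 l := by
      rw [heq, mul_assoc, Equiv.swap_mul_self, mul_one]
    rw [this]; group
  rw [hσ, mul_inv_rev, Equiv.swap_inv, Equiv.swap_inv]
  simp [Equiv.Perm.mul_apply, Equiv.swap_apply_left,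
    Equiv.swap_apply_of_ne_of_ne hk hkl]

end Aux

theorem stmt_16 (n : ℕ) (hn : 3 ≤ n) :
    (∀ u v : Equiv.Perm (Fin n), u ≠ v →
      ((starGraph n).neighborFinset u ∩ (starGraph n).neighborFinset v).card ≤ 2) ∧
    (∀ u v : Equiv.Perm (Fin n), u ≠ v →
      (starGraph n).neighborFinset u ≠ (starGraph n).neighborFinset v) := by
  haveI : NeZero n := ⟨by omega⟩
  constructor
  · intro u v huv
    refine le_trans (Finset.card_le_one.mpr ?_) one_le_two
    intro w1 h1 w2 h2
    rw [Finset.mem_inter, SimpleGraph.mem_neighborFinset,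
      SimpleGraph.mem_neighborFinset, starGraph_adj_iff, starGraph_adj_iff] at h1 h2
    obtain ⟨⟨k1, hk1, hw1⟩, ⟨l1, hl1, hw1'⟩⟩ := h1
    obtain ⟨⟨k2, hk2, hw2⟩, ⟨l2, hl2, hw2'⟩⟩ := h2
    have e1 := key huv hk1 hw1 hw1'
    have e2 := key huv hk2 hw2 hw2'
    rw [hw1, hw2, ← e1, e2]
  · intro u v huv hNe
    set k1 : Fin n := ⟨1, by omega⟩ with hk1def
    set k2 : Fin n := ⟨2, by omega⟩ with hk2def
    have hk1 : k1 ≠ 0 := by simp [hk1def, Fin.ext_iff, Fin.val_zero]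
    have hk2 : k2 ≠ 0 := by simp [hk2def, Fin.ext_iff, Fin.val_zero]
    have m1 : u * Equiv.swap 0 k1 ∈ (starGraph n).neighborFinset u := by
      rw [SimpleGraph.mem_neighborFinset, starGraph_adj_iff]
      exact ⟨k1, hk1, rfl⟩
    have m2 : u * Equiv.swap 0 k2 ∈ (starGraph n).neighborFinset u := by
      rw [SimpleGraph.mem_neighborFinset, starGraph_adj_iff]
      exact ⟨k2, hk2, rfl⟩
    rw [hNe, SimpleGraph.mem_neighborFinset, starGraph_adj_iff] at m1 m2
    obtain ⟨l1, hl1, hw1'⟩ := m1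
    obtain ⟨l2, hl2, hw2'⟩ := m2
    have e1 := key huv hk1 rfl hw1'
    have e2 := key huv hk2 rfl hw2'
    rw [e2] at e1
    have : (1 : ℕ) = 2 := by simpa [hk1def, hk2def, Fin.ext_iff] using e1
    omega
end
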